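/- Time derivative of the surface area element: for a smooth family of surface parametrizations Φ(t,·) with surface velocity w = ∂Φ/∂t, the determinant g(t,u) of the metric tensor satisfies at every (t,u): ∂(√g)/∂t = (∇_Σ·w) √g, where ∇_Σ·w = g^{αβ} (∂w/∂u^α) · τ_β. -/

import Mathlib

open MeasureTheory ContDiff

noncomputable section

/-- Euclidean dot product on `ℝ³`. -/
def dot3 (a b : Fin 3 → ℝ) : ℝ := ∑ i, a i * b i

/-- Euclidean norm on `ℝ³`. -/
def norm3 (a : Fin 3 → ℝ) : ℝ := Real.sqrt (dot3 a a)

/-- Cross product on `ℝ³`. -/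
def cross3 (a b : Fin 3 → ℝ) : Fin 3 → ℝ :=
  ![a 1 * b 2 - a 2 * b 1, a 2 * b 0 - a 0 * b 2, a 0 * b 1 - a 1 * b 0]

/-- Tangent vector `τ_α = ∂Φ/∂u^α` of a parametrized surface. -/
def tangent (Φ : (Fin 2 → ℝ) → Fin 3 → ℝ) (α : Fin 2) (u : Fin 2 → ℝ) : Fin 3 → ℝ :=
  fderiv ℝ Φ u (Pi.single α 1)

/-- Surface metric tensor `g_{αβ} = τ_α · τ_β`. -/
def metric (Φ : (Fin 2 → ℝ) → Fin 3 → ℝ) (u : Fin 2 → ℝ) : Matrix (Fin 2) (Fin 2) ℝ :=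
  Matrix.of fun α β => dot3 (tangent Φ α u) (tangent Φ β u)

/-- Inverse metric tensor `g^{αβ}`. -/
def metricInv (Φ : (Fin 2 → ℝ) → Fin 3 → ℝ) (u : Fin 2 → ℝ) : Matrix (Fin 2) (Fin 2) ℝ :=
  (metric Φ u)⁻¹

/-- Unit normal `ν = (τ₁ × τ₂)/‖τ₁ × τ₂‖`. -/
def normalVec (Φ : (Fin 2 → ℝ) → Fin 3 → ℝ) (u : Fin 2 → ℝ) : Fin 3 → ℝ :=
  (norm3 (cross3 (tangent Φ 0 u) (tangent Φ 1 u)))⁻¹ •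
    cross3 (tangent Φ 0 u) (tangent Φ 1 u)

/-- Second partial derivative `∂²Φ/∂u^α∂u^β`. -/
def secondDeriv (Φ : (Fin 2 → ℝ) → Fin 3 → ℝ) (α β : Fin 2) (u : Fin 2 → ℝ) : Fin 3 → ℝ :=
  fderiv ℝ (tangent Φ β) u (Pi.single α 1)

/-- Curvature tensor `b_{αβ} = (∂²Φ/∂u^α∂u^β) · ν`. -/
def curvTensor (Φ : (Fin 2 → ℝ) → Fin 3 → ℝ) (α β : Fin 2) (u : Fin 2 → ℝ) : ℝ :=
  dot3 (secondDeriv Φ α β u) (normalVec Φ u)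

/-- Mean curvature `κ_M = (1/2) g^{αβ} b_{αβ}`. -/
def meanCurv (Φ : (Fin 2 → ℝ) → Fin 3 → ℝ) (u : Fin 2 → ℝ) : ℝ :=
  (1/2) * ∑ α, ∑ β, metricInv Φ u α β * curvTensor Φ α β u

/-- Coordinate surface divergence `∇_Σ·b = g^{αβ} (∂b/∂u^α)·τ_β` of a vector field
defined along the surface. -/
def coordSurfDiv (Φ : (Fin 2 → ℝ) → Fin 3 → ℝ) (b : (Fin 2 → ℝ) → Fin 3 → ℝ)
    (u : Fin 2 → ℝ) : ℝ :=
  ∑ α, ∑ β, metricInv Φ u α β * dot3 (fderiv ℝ b u (Pi.single α 1)) (tangent Φ β u)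

/-- Surface velocity `w = ∂Φ/∂t` of a moving parametrized surface. -/
def surfVel (Φ : ℝ → (Fin 2 → ℝ) → Fin 3 → ℝ) (t : ℝ) (u : Fin 2 → ℝ) : Fin 3 → ℝ :=
  deriv (fun s => Φ s u) t

/-!
Write `G(t)` for the metric matrix at a fixed `u`. Since `∂_t τ_α = ∂_α w` (mixed partials
commute), `∂_t G_{αβ} = ∂_α w · τ_β + τ_α · ∂_β w`, and Jacobi's formula
`∂_t det G = det G · tr (G⁻¹ ∂_t G)` together with the symmetry of `G⁻¹` gives
`∂_t g = 2 (∇_Σ·w) g`. Linear independence of the tangents makes `g = |τ₁ × τ₂|²` positive,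
so `√g` is differentiable with derivative `∂_t g / (2 √g) = (∇_Σ·w) √g`.
-/

open Matrix

theorem HasDerivAt.dotProduct {𝕜 ι : Type*} [NontriviallyNormedField 𝕜] [Fintype ι]
    {f g : 𝕜 → ι → 𝕜} {f' g' : ι → 𝕜} {x : 𝕜} (hf : HasDerivAt f f' x)
    (hg : HasDerivAt g g' x) :
    HasDerivAt (fun s => f s ⬝ᵥ g s) (f' ⬝ᵥ g x + f x ⬝ᵥ g') x := by
  have hcoord : ∀ i ∈ Finset.univ,
      HasDerivAt (fun s => f s i * g s i) (f' i * g x i + f x i * g' i) x :=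
    fun i _ => (hasDerivAt_pi.1 hf i).mul (hasDerivAt_pi.1 hg i)
  simpa only [_root_.dotProduct, ← Finset.sum_add_distrib] using HasDerivAt.fun_sum hcoord

theorem Matrix.hasDerivAt_det_fin_two {𝕜 : Type*} [NontriviallyNormedField 𝕜]
    {M : 𝕜 → Matrix (Fin 2) (Fin 2) 𝕜} {M' : Matrix (Fin 2) (Fin 2) 𝕜} {x : 𝕜}
    (hM : ∀ i j, HasDerivAt (fun s => M s i j) (M' i j) x) :
    HasDerivAt (fun s => (M s).det) (adjugate (M x) * M').trace x := by
  simp only [det_fin_two]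
  refine (((hM 0 0).mul (hM 1 1)).sub ((hM 0 1).mul (hM 1 0))).congr_deriv ?_
  rw [adjugate_fin_two, trace_fin_two]
  simp [mul_apply, Fin.sum_univ_two]
  ring

theorem Matrix.adjugate_eq_det_smul_inv {K n : Type*} [Field K] [Fintype n] [DecidableEq n]
    {A : Matrix n n K} (h : A.det ≠ 0) : adjugate A = A.det • A⁻¹ := by
  rw [inv_def, smul_smul, Ring.inverse_eq_inv', mul_inv_cancel₀ h, one_smul]

theorem Matrix.IsSymm.trace_mul_add_transpose {R n : Type*} [CommSemiring R] [Fintype n]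
    {S : Matrix n n R} (hS : S.IsSymm) (B : Matrix n n R) :
    (S * (B + Bᵀ)).trace = 2 * (S * Bᵀ).trace := by
  have hswap : (S * B).trace = (S * Bᵀ).trace := by
    rw [← trace_transpose, transpose_mul, hS.eq, trace_mul_comm]
  rw [mul_add, trace_add, hswap, two_mul]

theorem HasDerivAt.sqrt_of_hasDerivAt_two_mul {f : ℝ → ℝ} {c x : ℝ}
    (hf : HasDerivAt f (2 * c * f x) x) (hx : 0 < f x) :
    HasDerivAt (fun y => √(f y)) (c * √(f x)) x := by
  refine (hf.sqrt hx.ne').congr_deriv ?_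
  have hs : √(f x) ≠ 0 := (Real.sqrt_pos.2 hx).ne'
  field_simp
  rw [Real.sq_sqrt hx.le]

theorem hasDerivAt_fderiv_apply_of_contDiff {E G : Type*} [NormedAddCommGroup E]
    [NormedSpace ℝ E] [NormedAddCommGroup G] [NormedSpace ℝ G] {Φ : ℝ → E → G}
    (hΦ : ContDiff ℝ 2 (fun p : ℝ × E => Φ p.1 p.2)) (t : ℝ) (u v : E) :
    HasDerivAt (fun s => fderiv ℝ (Φ s) u v)
      (fderiv ℝ (fun x => deriv (fun s => Φ s x) t) u v) t := by
  set F : ℝ × E → G := fun p => Φ p.1 p.2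
  have hF : Differentiable ℝ F := hΦ.differentiable two_ne_zero
  have hDF : Differentiable ℝ (fderiv ℝ F) :=
    (hΦ.fderiv_right (m := 1) (by norm_num)).differentiable one_ne_zero
  have hline : ∀ x : E, HasDerivAt (fun s : ℝ => (s, x)) ((1 : ℝ), (0 : E)) t := fun x =>
    (hasDerivAt_id t).prodMk (hasDerivAt_const t x)
  have hspace : ∀ s x, fderiv ℝ (Φ s) x = (fderiv ℝ F (s, x)).comp (.inr ℝ ℝ E) := fun s x =>
    ((hF (s, x)).hasFDerivAt.comp x (hasFDerivAt_prodMk_right s x)).fderiv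
  have htime : ∀ x, deriv (fun s => Φ s x) t = fderiv ℝ F (t, x) (1, 0) := fun x =>
    ((hF (t, x)).hasFDerivAt.comp_hasDerivAt (f := fun s : ℝ => (s, x)) t (hline x)).deriv
  have hspace_time : fderiv ℝ (fun x => fderiv ℝ F (t, x) (1, 0)) u v
      = fderiv ℝ (fderiv ℝ F) (t, u) (0, v) (1, 0) := by
    have h : HasFDerivAt (fun x => fderiv ℝ F (t, x) (1, 0)) _ u :=
      ((hDF (t, u)).hasFDerivAt.comp u (hasFDerivAt_prodMk_right t u)).clm_apply
        (hasFDerivAt_const ((1 : ℝ), (0 : E)) u)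
    rw [h.fderiv]
    simp
  simp only [hspace, htime, hspace_time, ContinuousLinearMap.comp_apply,
    ContinuousLinearMap.inr_apply]
  rw [← (hΦ.contDiffAt.isSymmSndFDerivAt (by simp)) (1, 0) (0, v)]
  have h := ((hDF (t, u)).hasFDerivAt.comp_hasDerivAt (f := fun s : ℝ => (s, u)) t
    (hline u)).clm_apply (hasDerivAt_const t ((0 : ℝ), v))
  simpa using h

theorem dot3_eq_dotProduct (a b : Fin 3 → ℝ) : dot3 a b = a ⬝ᵥ b := rfl

theorem metric_isSymm (Φ : (Fin 2 → ℝ) → Fin 3 → ℝ) (u : Fin 2 → ℝ) :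
    (metric Φ u).IsSymm := by
  ext α β
  simp only [metric, transpose_apply, of_apply, dot3_eq_dotProduct, dotProduct_comm]

theorem det_metric_eq_cross_dot_cross (Φ : (Fin 2 → ℝ) → Fin 3 → ℝ) (u : Fin 2 → ℝ) :
    (metric Φ u).det
      = tangent Φ 0 u ⨯₃ tangent Φ 1 u ⬝ᵥ tangent Φ 0 u ⨯₃ tangent Φ 1 u := by
  rw [det_fin_two, cross_dot_cross]
  simp only [metric, of_apply, dot3_eq_dotProduct, dotProduct_comm (tangent Φ 1 u)]

theorem det_metric_pos {Φ : (Fin 2 → ℝ) → Fin 3 → ℝ} {u : Fin 2 → ℝ}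
    (h : LinearIndependent ℝ ![tangent Φ 0 u, tangent Φ 1 u]) : 0 < (metric Φ u).det := by
  rw [det_metric_eq_cross_dot_cross]
  simpa using dotProduct_star_self_pos_iff.2 (crossProduct_ne_zero_iff_linearIndependent.2 h)

def tangentialGrad (Φ b : (Fin 2 → ℝ) → Fin 3 → ℝ) (u : Fin 2 → ℝ) :
    Matrix (Fin 2) (Fin 2) ℝ :=
  of fun α β => dot3 (fderiv ℝ b u (Pi.single α 1)) (tangent Φ β u)

theorem coordSurfDiv_eq_trace (Φ b : (Fin 2 → ℝ) → Fin 3 → ℝ) (u : Fin 2 → ℝ) :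
    coordSurfDiv Φ b u = (metricInv Φ u * (tangentialGrad Φ b u)ᵀ).trace := by
  simp [coordSurfDiv, tangentialGrad, trace, mul_apply]

theorem hasDerivAt_metric {Φ : ℝ → (Fin 2 → ℝ) → Fin 3 → ℝ}
    (hΦ : ContDiff ℝ 2 (fun p : ℝ × (Fin 2 → ℝ) => Φ p.1 p.2)) (t : ℝ) (u : Fin 2 → ℝ)
    (α β : Fin 2) :
    HasDerivAt (fun s => metric (Φ s) u α β)
      ((tangentialGrad (Φ t) (surfVel Φ t) u + (tangentialGrad (Φ t) (surfVel Φ t) u)ᵀ) α β)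
      t := by
  have hτ : ∀ γ, HasDerivAt (fun s => tangent (Φ s) γ u)
      (fderiv ℝ (surfVel Φ t) u (Pi.single γ 1)) t := fun γ =>
    hasDerivAt_fderiv_apply_of_contDiff hΦ t u (Pi.single γ 1)
  refine ((hτ α).dotProduct (hτ β)).congr_deriv ?_
  simp only [tangentialGrad, Matrix.add_apply, transpose_apply, of_apply, dot3_eq_dotProduct,
    dotProduct_comm (tangent (Φ t) α u)]

theorem hasDerivAt_det_metric {Φ : ℝ → (Fin 2 → ℝ) → Fin 3 → ℝ}
    (hΦ : ContDiff ℝ 2 (fun p : ℝ × (Fin 2 → ℝ) => Φ p.1 p.2)) {t : ℝ} {u : Fin 2 → ℝ}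
    (hg : (metric (Φ t) u).det ≠ 0) :
    HasDerivAt (fun s => (metric (Φ s) u).det)
      (2 * coordSurfDiv (Φ t) (surfVel Φ t) u * (metric (Φ t) u).det) t := by
  refine (hasDerivAt_det_fin_two (hasDerivAt_metric hΦ t u)).congr_deriv ?_
  rw [adjugate_eq_det_smul_inv hg, smul_mul_assoc, trace_smul,
    (metric_isSymm (Φ t) u).inv.trace_mul_add_transpose, coordSurfDiv_eq_trace, metricInv,
    smul_eq_mul]
  ring

theorem area_element_time_derivative_general
    (T : ℝ)
    (U : Set (Fin 2 → ℝ))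
    (Φ : ℝ → (Fin 2 → ℝ) → Fin 3 → ℝ)
    (hΦ : ContDiff ℝ ∞ (fun p : ℝ × (Fin 2 → ℝ) => Φ p.1 p.2))
    (hindep : ∀ t ∈ Set.Icc 0 T, ∀ u ∈ U,
      LinearIndependent ℝ ![tangent (Φ t) 0 u, tangent (Φ t) 1 u]) :
    ∀ t ∈ Set.Icc 0 T, ∀ u ∈ U,
      HasDerivAt (fun s => Real.sqrt ((metric (Φ s) u).det))
        (coordSurfDiv (Φ t) (surfVel Φ t) u * Real.sqrt ((metric (Φ t) u).det)) t := by
  intro t ht u hu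
  have hg := det_metric_pos (hindep t ht u hu)
  exact (hasDerivAt_det_metric (hΦ.of_le ENat.LEInfty.out) hg.ne').sqrt_of_hasDerivAt_two_mul hg

/-- **Time derivative of the surface area element:** `∂(√g)/∂t = (∇_Σ·w) √g`. -/
theorem area_element_time_derivative
    (T : ℝ) (hT : 0 < T)
    (U : Set (Fin 2 → ℝ)) (hU : IsOpen U)
    (Φ : ℝ → (Fin 2 → ℝ) → Fin 3 → ℝ)
    (hΦ : ContDiff ℝ ∞ (fun p : ℝ × (Fin 2 → ℝ) => Φ p.1 p.2))
    (hΦinj : ∀ t ∈ Set.Icc 0 T, Set.InjOn (Φ t) U)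
    (hindep : ∀ t ∈ Set.Icc 0 T, ∀ u ∈ U,
      LinearIndependent ℝ ![tangent (Φ t) 0 u, tangent (Φ t) 1 u]) :
    ∀ t ∈ Set.Icc 0 T, ∀ u ∈ U,
      HasDerivAt (fun s => Real.sqrt ((metric (Φ s) u).det))
        (coordSurfDiv (Φ t) (surfVel Φ t) u * Real.sqrt ((metric (Φ t) u).det)) t :=
  area_element_time_derivative_general T U Φ hΦ hindep
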